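/- Fix an integer N ≥ 1 and let ℂ^{N²} have orthonormal basis |m,n⟩ with m, n ∈ ℤ/Nℤ. Define unitaries U and V by U|m,n⟩ = U_x(m,n)|m+1,n⟩ and V|m,n⟩ = e^{2πi m/N²}|m,n+1⟩, where (for representatives 0 ≤ m,n ≤ N−1) U_x(m,n) = 1 if m ≠ N−1 and U_x(N−1,n) = e^{−2πi n/N}, and all index arithmetic is modulo N. Then the spectrum of U is exactly the set of N²-th roots of unity {e^{2πi j/N²} : j = 0,…,N²−1}, each eigenvalue having multiplicity one; and the same holds for V. -/

import Mathlib

open scoped Matrix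

/-- The transport phase `U_x(m,n)`: equal to `1` unless `m = N-1`, where it equals
`exp(-2πi n/N)`. -/
noncomputable def Uxphase (N : ℕ) (m n : ZMod N) : ℂ :=
  if m.val = N - 1 then Complex.exp (-(2 * Real.pi * Complex.I * n.val / N)) else 1

/-- The unitary `U` with `U|m,n⟩ = U_x(m,n)|m+1,n⟩`. -/
noncomputable def Umat (N : ℕ) : Matrix (ZMod N × ZMod N) (ZMod N × ZMod N) ℂ :=
  Matrix.of fun p q => if p = (q.1 + 1, q.2) then Uxphase N q.1 q.2 else 0

/-- The unitary `V` with `V|m,n⟩ = e^{2πi m/N²}|m,n+1⟩`. -/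
noncomputable def Vmat (N : ℕ) : Matrix (ZMod N × ZMod N) (ZMod N × ZMod N) ℂ :=
  Matrix.of fun p q =>
    if p = (q.1, q.2 + 1) then Complex.exp (2 * Real.pi * Complex.I * q.1.val / (N ^ 2)) else 0

/-!
`U` and `V` are weighted cyclic shifts: `U` moves along the cycles `ZMod N × {n}`, `V` along
`{m} × ZMod N`. On a single cycle with weights `c`, the eigenvalue equation
`c k * x k = z * x (k + 1)` forces `z ^ N = ∏ k, c k` as soon as `x ≠ 0`, and conversely, for
`z ≠ 0`, this condition produces an eigenvector supported on that cycle. The cycle products are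
`exp (-2πi n / N)` for `U` and `exp (2πi m / N)` for `V`; both run through all `N`-th roots of
unity, so the eigenvalues are exactly the `N²`-th roots of unity. These are `N²` distinct
eigenvalues in dimension `N²`, and eigenspaces for distinct eigenvalues are independent, so each
eigenspace is a line.
-/

open Finset Module Complex
open scoped Real

theorem iSupIndep.sum_finrank_le {K V ι : Type*} [Field K] [AddCommGroup V] [Module K V]
    [FiniteDimensional K V] {p : ι → Submodule K V} (hp : iSupIndep p) (s : Finset ι) :
    ∑ i ∈ s, finrank K (p i) ≤ finrank K V := by
  classical
  have hs : iSupIndep fun i : s => p i := hp.comp Subtype.val_injective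
  calc ∑ i ∈ s, finrank K (p i) = ∑ i : s, finrank K (p i) := (sum_coe_sort s _).symm
    _ = finrank K (DirectSum s fun i => p i) := (finrank_directSum K _).symm
    _ ≤ finrank K V := LinearMap.finrank_le_finrank_of_injective hs.dfinsupp_lsum_injective

theorem Module.End.finrank_eigenspace_eq_one_of_finrank_le_card {K V : Type*} [Field K]
    [AddCommGroup V] [Module K V] [FiniteDimensional K V] {f : End K V} {S : Finset K}
    (hS : ∀ μ ∈ S, f.HasEigenvalue μ) (hcard : finrank K V ≤ #S) {μ : K} (hμ : μ ∈ S) :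
    finrank K (f.eigenspace μ) = 1 := by
  have hpos : ∀ ν ∈ S, 1 ≤ finrank K (f.eigenspace ν) := fun ν hν =>
    Submodule.one_le_finrank_iff.mpr (hS ν hν)
  have hsum : ∑ ν ∈ S, finrank K (f.eigenspace ν) ≤ ∑ _ν ∈ S, 1 := by
    simpa using ((f.eigenspaces_iSupIndep).sum_finrank_le S).trans hcard
  exact ((sum_eq_sum_iff_of_le hpos).mp (le_antisymm (sum_le_sum hpos) hsum) μ hμ).symm

theorem Matrix.hasEigenvalue_mulVecLin_iff {K ι : Type*} [Field K] [Fintype ι] [DecidableEq ι]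
    {A : Matrix ι ι K} {z : K} :
    Module.End.HasEigenvalue A.mulVecLin z ↔ ∃ v, v ≠ 0 ∧ A *ᵥ v = z • v := by
  simp only [Module.End.hasEigenvalue_iff, Submodule.ne_bot_iff, Module.End.mem_eigenspace_iff,
    Matrix.mulVecLin_apply, and_comm]

theorem Matrix.spectrum_eq_setOf_hasEigenvalue {K ι : Type*} [Field K] [Fintype ι]
    [DecidableEq ι] (A : Matrix ι ι K) :
    spectrum K A = {z | Module.End.HasEigenvalue A.mulVecLin z} := by
  ext z
  rw [← Matrix.spectrum_toLin', Set.mem_ofPred_eq, Module.End.hasEigenvalue_iff_mem_spectrum]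
  rfl

theorem Matrix.spectrum_eq_and_finrank_eigenspace_eq_one {K ι : Type*} [Field K] [Fintype ι]
    [DecidableEq ι] {A : Matrix ι ι K} {n : ℕ} [NeZero n] {ζ : K} (hζ : IsPrimitiveRoot ζ n)
    (hcard : Fintype.card ι = n)
    (h : ∀ z, Module.End.HasEigenvalue A.mulVecLin z ↔ z ^ n = 1) :
    spectrum K A = {z | z ^ n = 1} ∧
      ∀ z, z ^ n = 1 → finrank K (Module.End.eigenspace A.mulVecLin z) = 1 := by
  have hmem : ∀ z, z ∈ Polynomial.nthRootsFinset n (1 : K) ↔ z ^ n = 1 :=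
    fun z => Polynomial.mem_nthRootsFinset (Nat.pos_of_neZero n) 1
  refine ⟨by rw [spectrum_eq_setOf_hasEigenvalue]; ext z; exact h z, fun z hz => ?_⟩
  refine Module.End.finrank_eigenspace_eq_one_of_finrank_le_card
    (fun μ hμ => (h μ).mpr ((hmem μ).mp hμ)) ?_ ((hmem z).mpr hz)
  rw [finrank_fintype_fun_eq_card, hζ.card_nthRootsFinset, hcard]

theorem Matrix.of_ite_perm_mulVec_eq_smul_iff {ι R : Type*} [Fintype ι] [DecidableEq ι]
    [CommSemiring R] (σ : Equiv.Perm ι) (w v : ι → R) (z : R) :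
    (Matrix.of fun p q => if p = σ q then w q else 0) *ᵥ v = z • v ↔
      ∀ q, w q * v q = z * v (σ q) := by
  have hmulVec : ∀ q,
      ((Matrix.of fun p q => if p = σ q then w q else 0) *ᵥ v) (σ q) = w q * v q := by
    intro q
    simp [Matrix.mulVec, dotProduct, σ.injective.eq_iff]
  rw [funext_iff, ← σ.forall_congr_right]
  simp only [hmulVec, Pi.smul_apply, smul_eq_mul]

theorem ZMod.prod_range_natCast {M : Type*} [CommMonoid M] (N : ℕ) [NeZero N] (f : ZMod N → M) :
    ∏ i ∈ range N, f i = ∏ a, f a :=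
  prod_nbij' (fun i => (i : ZMod N)) ZMod.val (by simp) (fun a _ => mem_range.mpr a.val_lt)
    (fun i hi => ZMod.val_cast_of_lt (mem_range.mp hi)) (fun a _ => ZMod.natCast_zmod_val a)
    (fun _ _ => rfl)

theorem pow_mul_apply_add_natCast_of_recurrence {M : Type*} [CommMonoid M] {N : ℕ}
    {c x : ZMod N → M} {z : M} (h : ∀ k, c k * x k = z * x (k + 1))
    (k : ZMod N) (j : ℕ) : z ^ j * x (k + j) = (∏ i ∈ range j, c (k + i)) * x k := by
  induction j with
  | zero => simp
  | succ j ih =>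
    calc z ^ (j + 1) * x (k + (j + 1 : ℕ)) = z ^ j * (z * x (k + j + 1)) := by
          rw [Nat.cast_succ, ← add_assoc, pow_succ, mul_assoc]
      _ = (∏ i ∈ range (j + 1), c (k + i)) * x k := by
          rw [← h, prod_range_succ, mul_left_comm, ih]; ac_rfl

section CyclicRecurrence

variable {K : Type*} [Field K] {N : ℕ} {c x : ZMod N → K} {z : K}

theorem pow_eq_prod_of_recurrence [NeZero N] (h : ∀ k, c k * x k = z * x (k + 1)) (hx : x ≠ 0) :
    z ^ N = ∏ k, c k := by
  obtain ⟨k, hk⟩ := Function.ne_iff.mp hx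
  have hN := pow_mul_apply_add_natCast_of_recurrence h k N
  rw [ZMod.natCast_self, add_zero, ZMod.prod_range_natCast N (fun i => c (k + i))] at hN
  exact (mul_right_cancel₀ hk hN).trans (Equiv.prod_comp (Equiv.addLeft k) c)

theorem exists_recurrence_of_pow_eq_prod [NeZero N] (hz : z ≠ 0) (h : z ^ N = ∏ k, c k) :
    ∃ x : ZMod N → K, x ≠ 0 ∧ ∀ k, c k * x k = z * x (k + 1) := by
  set y : ℕ → K := fun j => (∏ i ∈ range j, c i) / z ^ j
  have hy : ∀ j : ℕ, c j * y j = z * y (j + 1) := by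
    intro j
    simp only [y, prod_range_succ, pow_succ]
    field_simp
  have hyN : y N = y 0 := by
    simp [y, ZMod.prod_range_natCast, ← h, hz]
  refine ⟨fun k => y k.val, Function.ne_iff.mpr ⟨0, by simp [y]⟩, fun k => ?_⟩
  have hval : y (k + 1).val = y (k.val + 1) := by
    rw [ZMod.val_add, ZMod.val_one_eq_one_mod, Nat.add_mod_mod]
    rcases (Nat.succ_le_of_lt k.val_lt).lt_or_eq with hlt | heq
    · rw [Nat.mod_eq_of_lt hlt]
    · rw [show k.val + 1 = N from heq, Nat.mod_self, hyN]
  have hk := hy k.val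
  rw [ZMod.natCast_zmod_val] at hk
  simpa only [hval] using hk

theorem exists_pow_eq_prod_of_fiberwise_recurrence [NeZero N] {ι : Type*}
    {w : ZMod N → ι → K} {v : ZMod N × ι → K}
    (h : ∀ k i, w k i * v (k, i) = z * v (k + 1, i)) (hv : v ≠ 0) :
    ∃ i, z ^ N = ∏ k, w k i := by
  obtain ⟨⟨k, i⟩, hki⟩ := Function.ne_iff.mp hv
  exact ⟨i, pow_eq_prod_of_recurrence (fun k => h k i) (Function.ne_iff.mpr ⟨k, hki⟩)⟩

theorem exists_fiberwise_recurrence_of_pow_eq_prod [NeZero N] {ι : Type*} [DecidableEq ι]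
    {w : ZMod N → ι → K} {i : ι} (hz : z ≠ 0) (h : z ^ N = ∏ k, w k i) :
    ∃ v : ZMod N × ι → K, v ≠ 0 ∧ ∀ k j, w k j * v (k, j) = z * v (k + 1, j) := by
  obtain ⟨x, hx, hrec⟩ := exists_recurrence_of_pow_eq_prod hz h
  obtain ⟨k, hk⟩ := Function.ne_iff.mp hx
  refine ⟨fun p => if p.2 = i then x p.1 else 0, Function.ne_iff.mpr ⟨(k, i), by simpa⟩,
    fun k j => ?_⟩
  by_cases hj : j = i
  · subst hj
    simpa using hrec k
  · simp [hj]

end CyclicRecurrence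

theorem Complex.exp_two_pi_mul_I_mul_div_pow_self (k : ℕ) {n : ℕ} (hn : n ≠ 0) :
    exp (2 * π * I * k / n) ^ n = 1 := by
  rw [← exp_nat_mul, show (n : ℂ) * (2 * π * I * k / n) = k * (2 * π * I) by field_simp]
  exact exp_nat_mul_two_pi_mul_I k

theorem Complex.exists_eq_exp_of_pow_eq_one {N : ℕ} [NeZero N] {w : ℂ} (hw : w ^ N = 1) :
    ∃ k : ZMod N, w = exp (2 * π * I * k.val / N) := by
  obtain ⟨i, hi, rfl⟩ := (isPrimitiveRoot_exp N (NeZero.ne N)).eq_pow_of_pow_eq_one hw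
  refine ⟨i, ?_⟩
  rw [ZMod.val_cast_of_lt hi, ← exp_nat_mul]
  ring_nf

theorem prod_Uxphase (N : ℕ) [NeZero N] (n : ZMod N) :
    ∏ m, Uxphase N m n = exp (-(2 * π * I * n.val / N)) := by
  have hlast : ((N - 1 : ℕ) : ZMod N).val = N - 1 :=
    ZMod.val_cast_of_lt (Nat.sub_lt (Nat.pos_of_neZero N) one_pos)
  rw [prod_eq_single ((N - 1 : ℕ) : ZMod N)]
  · simp [Uxphase, hlast]
  · intro m _ hm
    have : m.val ≠ N - 1 := fun h => hm (by rw [← h, ZMod.natCast_zmod_val])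
    simp [Uxphase, this]
  · simp

theorem Umat_mulVec_eq_smul_iff (N : ℕ) [NeZero N] (v : ZMod N × ZMod N → ℂ) (z : ℂ) :
    Umat N *ᵥ v = z • v ↔ ∀ m n, Uxphase N m n * v (m, n) = z * v (m + 1, n) :=
  (Matrix.of_ite_perm_mulVec_eq_smul_iff ((Equiv.addRight 1).prodCongr (Equiv.refl _))
    (fun q => Uxphase N q.1 q.2) v z).trans Prod.forall

theorem Vmat_mulVec_eq_smul_iff (N : ℕ) [NeZero N] (v : ZMod N × ZMod N → ℂ) (z : ℂ) :
    Vmat N *ᵥ v = z • v ↔ ∀ m n,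
      exp (2 * π * I * m.val / (N ^ 2)) * v (m, n) = z * v (m, n + 1) :=
  (Matrix.of_ite_perm_mulVec_eq_smul_iff
    ((Equiv.refl (ZMod N)).prodCongr (Equiv.addRight (1 : ZMod N)))
    (fun q => exp (2 * π * I * q.1.val / (N ^ 2))) v z).trans Prod.forall

theorem Umat_hasEigenvalue_iff (N : ℕ) [NeZero N] (z : ℂ) :
    Module.End.HasEigenvalue (Umat N).mulVecLin z ↔ z ^ (N ^ 2) = 1 := by
  simp only [Matrix.hasEigenvalue_mulVecLin_iff, Umat_mulVec_eq_smul_iff]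
  constructor
  · rintro ⟨v, hv, h⟩
    obtain ⟨n, hn⟩ := exists_pow_eq_prod_of_fiberwise_recurrence h hv
    rw [prod_Uxphase] at hn
    rw [sq, pow_mul, hn, exp_neg, inv_pow, exp_two_pi_mul_I_mul_div_pow_self _ (NeZero.ne N),
      inv_one]
  · intro hz
    have hz0 : z ≠ 0 := (IsUnit.of_pow_eq_one hz (NeZero.ne _)).ne_zero
    obtain ⟨n, hn⟩ := exists_eq_exp_of_pow_eq_one (w := (z ^ N)⁻¹) (by
      rw [inv_pow, ← pow_mul, ← sq, hz, inv_one])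
    refine exists_fiberwise_recurrence_of_pow_eq_prod hz0 (i := n) ?_
    rw [prod_Uxphase, exp_neg, ← hn, inv_inv]

theorem Vmat_hasEigenvalue_iff (N : ℕ) [NeZero N] (z : ℂ) :
    Module.End.HasEigenvalue (Vmat N).mulVecLin z ↔ z ^ (N ^ 2) = 1 := by
  set e : ZMod N → ℂ := fun m => exp (2 * π * I * m.val / (N ^ 2))
  have he : ∀ m, ∏ _n : ZMod N, e m = exp (2 * π * I * m.val / N) := by
    intro m
    rw [prod_const, card_univ, ZMod.card, ← exp_nat_mul]
    congr 1
    field_simp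
  have hswap : ∀ v : ZMod N × ZMod N → ℂ, v ≠ 0 → v ∘ Prod.swap ≠ 0 := fun v hv h0 =>
    hv (funext fun p => by simpa using congrFun h0 p.swap)
  simp only [Matrix.hasEigenvalue_mulVecLin_iff, Vmat_mulVec_eq_smul_iff]
  constructor
  · rintro ⟨v, hv, h⟩
    obtain ⟨m, hm⟩ := exists_pow_eq_prod_of_fiberwise_recurrence (w := fun _ m => e m)
      (fun n m => h m n) (hswap v hv)
    rw [he] at hm
    rw [sq, pow_mul, hm, exp_two_pi_mul_I_mul_div_pow_self _ (NeZero.ne N)]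
  · intro hz
    have hz0 : z ≠ 0 := (IsUnit.of_pow_eq_one hz (NeZero.ne _)).ne_zero
    obtain ⟨m, hm⟩ := exists_eq_exp_of_pow_eq_one (w := z ^ N) (by rw [← pow_mul, ← sq, hz])
    obtain ⟨v, hv, h⟩ := exists_fiberwise_recurrence_of_pow_eq_prod (w := fun _ m => e m)
      (i := m) hz0 (by rw [he, hm])
    exact ⟨v ∘ Prod.swap, hswap v hv, fun m n => h n m⟩

theorem stmt14 (N : ℕ) [NeZero N] :
    (spectrum ℂ (Umat N) = {z : ℂ | z ^ (N ^ 2) = 1} ∧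
      ∀ z : ℂ, z ^ (N ^ 2) = 1 →
        Module.finrank ℂ (Module.End.eigenspace (Matrix.mulVecLin (Umat N)) z) = 1) ∧
    (spectrum ℂ (Vmat N) = {z : ℂ | z ^ (N ^ 2) = 1} ∧
      ∀ z : ℂ, z ^ (N ^ 2) = 1 →
        Module.finrank ℂ (Module.End.eigenspace (Matrix.mulVecLin (Vmat N)) z) = 1) := by
  have hζ := isPrimitiveRoot_exp (N ^ 2) (NeZero.ne _)
  have hcard : Fintype.card (ZMod N × ZMod N) = N ^ 2 := by
    rw [Fintype.card_prod, ZMod.card, sq]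
  exact ⟨Matrix.spectrum_eq_and_finrank_eigenspace_eq_one hζ hcard (Umat_hasEigenvalue_iff N),
    Matrix.spectrum_eq_and_finrank_eigenspace_eq_one hζ hcard (Vmat_hasEigenvalue_iff N)⟩
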